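/- Let A be the 3-order 2-dimensional tensor with entries a_{111} = 1, a_{122} = -1, a_{211} = 2, a_{222} = -1 and all other entries zero, so that for x ∈ ℝ²_+, A x² = (x₁² - x₂², 2x₁² - x₂²). Then A is an ER-tensor, i.e., there is no pair (x,t) with x ∈ ℝ²_+, x ≠ 0, t ≥ 0, such that (A x²)_i + t x_i = 0 whenever x_i > 0 and (A x²)_i ≥ 0 whenever x_i = 0. -/
import Mathlib


open Finset

/-- `(A x^{m-1})_i` for an `m`-order `n`-dimensional tensor, where `k = m - 1`:
entries are indexed by a leading index `i` and `k` trailing indices. -/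
def tmap {n k : ℕ} (A : Fin n → (Fin k → Fin n) → ℝ) (x : Fin n → ℝ) : Fin n → ℝ :=
  fun i => ∑ f : Fin k → Fin n, A i f * ∏ j, x (f j)

def SemiPositive {n k : ℕ} (A : Fin n → (Fin k → Fin n) → ℝ) : Prop :=
  ∀ x : Fin n → ℝ, (∀ i, 0 ≤ x i) → x ≠ 0 → ∃ i, 0 < x i ∧ 0 ≤ tmap A x i

def StrictlySemiPositive {n k : ℕ} (A : Fin n → (Fin k → Fin n) → ℝ) : Prop :=
  ∀ x : Fin n → ℝ, (∀ i, 0 ≤ x i) → x ≠ 0 → ∃ i, 0 < x i ∧ 0 < tmap A x i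

def WeakPTensor {n k : ℕ} (A : Fin n → (Fin k → Fin n) → ℝ) : Prop :=
  ∀ x : Fin n → ℝ, x ≠ 0 → ∃ i, (x i) ^ k * tmap A x i > 0

def ERTensor {n k : ℕ} (A : Fin n → (Fin k → Fin n) → ℝ) : Prop :=
  ¬ ∃ (x : Fin n → ℝ) (t : ℝ), (∀ i, 0 ≤ x i) ∧ x ≠ 0 ∧ 0 ≤ t ∧
    (∀ i, 0 < x i → tmap A x i + t * x i = 0) ∧
    (∀ i, x i = 0 → 0 ≤ tmap A x i)

def RTensor {n k : ℕ} (A : Fin n → (Fin k → Fin n) → ℝ) : Prop :=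
  ¬ ∃ (x : Fin n → ℝ) (t : ℝ), (∀ i, 0 ≤ x i) ∧ x ≠ 0 ∧ 0 ≤ t ∧
    (∀ i, 0 < x i → tmap A x i + t = 0) ∧
    (∀ i, x i = 0 → 0 ≤ tmap A x i + t)

def R0Tensor {n k : ℕ} (A : Fin n → (Fin k → Fin n) → ℝ) : Prop :=
  ¬ ∃ x : Fin n → ℝ, (∀ i, 0 ≤ x i) ∧ x ≠ 0 ∧
    (∀ i, 0 < x i → tmap A x i = 0) ∧
    (∀ i, x i = 0 → 0 ≤ tmap A x i)

/-- The tensor of Example 3.2: a_{111} = 1, a_{122} = -1, a_{211} = 2, a_{222} = -1. -/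
def exB : Fin 2 → (Fin 2 → Fin 2) → ℝ := fun i f =>
  if i = 0 ∧ f 0 = 0 ∧ f 1 = 0 then 1
  else if i = 0 ∧ f 0 = 1 ∧ f 1 = 1 then -1
  else if i = 1 ∧ f 0 = 0 ∧ f 1 = 0 then 2
  else if i = 1 ∧ f 0 = 1 ∧ f 1 = 1 then -1
  else 0

lemma tmap_exB (x : Fin 2 → ℝ) :
    tmap exB x 0 = x 0 ^ 2 - x 1 ^ 2 ∧ tmap exB x 1 = 2 * x 0 ^ 2 - x 1 ^ 2 := by
  constructor <;>
  · rw [tmap, ← (finTwoArrowEquiv (Fin 2)).symm.sum_comp]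
    simp [finTwoArrowEquiv, exB, Fintype.sum_prod_type, Fin.sum_univ_two, Fin.prod_univ_two,
      Matrix.cons_val_zero, Matrix.cons_val_one]
    ring

theorem stmt9 : ERTensor exB := by
  rintro ⟨x, t, hx, hx0, ht, hpos, hzero⟩
  obtain ⟨h0, h1⟩ := tmap_exB x
  rcases (hx 0).lt_or_eq with p0 | p0
  · rcases (hx 1).lt_or_eq with p1 | p1
    · have e0 := hpos 0 p0; have e1 := hpos 1 p1
      rw [h0] at e0; rw [h1] at e1
      nlinarith [sq_nonneg (x 0 - x 1), sq_nonneg (x 0 + x 1), mul_pos p0 p1, sq_nonneg (x 0)]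
    · have e0 := hpos 0 p0
      rw [h0, ← p1] at e0
      nlinarith [mul_nonneg ht p0.le]
  · rcases (hx 1).lt_or_eq with p1 | p1
    · have e1 := hzero 0 p0.symm
      rw [h0, ← p0] at e1
      nlinarith
    · exact hx0 (funext fun i => by fin_cases i <;> simp [← p0, ← p1])
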